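/- arXiv:2205.13450 — 2 statements merged into one kernel-verified Lean document; each statement's English description precedes it below -/
import Mathlib

section
/- Let $n_0, n_1, \dots, n_k$ be nonnegative reals with $\sum_{i=0}^k n_i \le T$, and suppose $n_i \ge 4^i C \sqrt{S_i}$ for all $0 \le i \le k$, where $C > 0$ and $S_0, \dots, S_k \ge 0$. Then $\sum_{i=0}^k \sqrt{S_i} \le \left(\sqrt{\log_4 X} + 1\right)\sqrt{\sum_{i=0}^k S_i}$, where $X = T / \left(C\sqrt{\sum_{i=0}^k S_i}\right)$ (assuming $\sum_i S_i > 0$ and $X \ge 1$). -/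
open Finset

private lemma split_bound (k m : ℕ) (n S : ℕ → ℝ) (T C X : ℝ) (hC : 0 < C)
    (hnn : ∀ i ≤ k, 0 ≤ n i) (hSnn : ∀ i ≤ k, 0 ≤ S i)
    (hbudget : ∑ i ∈ range (k + 1), n i ≤ T)
    (hgrowth : ∀ i ≤ k, (4 : ℝ) ^ i * C * Real.sqrt (S i) ≤ n i)
    (hT : T = X * (C * Real.sqrt (∑ i ∈ range (k + 1), S i))) :
    ∑ i ∈ range (k + 1), Real.sqrt (S i) ≤
      (Real.sqrt m + X / 4 ^ m) * Real.sqrt (∑ i ∈ range (k + 1), S i) := by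
  have hSsum : 0 ≤ ∑ i ∈ range (k + 1), S i :=
    Finset.sum_nonneg fun i hi => hSnn i (Nat.lt_succ_iff.mp (mem_range.mp hi))
  set s := Real.sqrt (∑ i ∈ range (k + 1), S i) with hsdef
  have hsnn : 0 ≤ s := Real.sqrt_nonneg _
  have hsplit : ∑ i ∈ range (k + 1), Real.sqrt (S i)
      = ∑ i ∈ (range (k + 1)).filter (fun i => i < m), Real.sqrt (S i)
      + ∑ i ∈ (range (k + 1)).filter (fun i => ¬ i < m), Real.sqrt (S i) :=
    (sum_filter_add_sum_filter_not _ _ _).symm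
  set A := (range (k + 1)).filter (fun i => i < m) with hA
  set B := (range (k + 1)).filter (fun i => ¬ i < m) with hB
  have hmemA : ∀ i ∈ A, i ≤ k ∧ i < m := by
    intro i hi
    simp only [hA, mem_filter, mem_range, Nat.lt_succ_iff] at hi
    exact hi
  have hmemB : ∀ i ∈ B, i ≤ k ∧ m ≤ i := by
    intro i hi
    simp only [hB, mem_filter, mem_range, Nat.lt_succ_iff, not_lt] at hi
    exact hi
  -- head bound
  have hhead : ∑ i ∈ A, Real.sqrt (S i) ≤ Real.sqrt m * s := by
    have h1 : (∑ i ∈ A, Real.sqrt (S i)) ^ 2 ≤ A.card * ∑ i ∈ A, S i := by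
      have := sq_sum_le_card_mul_sum_sq (s := A) (f := fun i => Real.sqrt (S i))
      calc (∑ i ∈ A, Real.sqrt (S i)) ^ 2 ≤ A.card * ∑ i ∈ A, (Real.sqrt (S i)) ^ 2 := this
        _ = A.card * ∑ i ∈ A, S i := by
            congr 1
            exact Finset.sum_congr rfl fun i hi => Real.sq_sqrt (hSnn i (hmemA i hi).1)
    have h2 : (A.card : ℝ) * ∑ i ∈ A, S i ≤ (m : ℝ) * ∑ i ∈ range (k + 1), S i := by
      have hsub : A ⊆ range m := fun i hi => mem_range.mpr (hmemA i hi).2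
      apply mul_le_mul
      · exact_mod_cast (Finset.card_le_card hsub).trans_eq (Finset.card_range m)
      · exact Finset.sum_le_sum_of_subset_of_nonneg (Finset.filter_subset _ _)
          fun i hi _ => hSnn i (Nat.lt_succ_iff.mp (mem_range.mp hi))
      · exact Finset.sum_nonneg fun i hi => hSnn i (hmemA i hi).1
      · positivity
    have h3 : ∑ i ∈ A, Real.sqrt (S i) ≤ Real.sqrt ((m : ℝ) * ∑ i ∈ range (k + 1), S i) := by
      have hnn' : 0 ≤ ∑ i ∈ A, Real.sqrt (S i) :=
        Finset.sum_nonneg fun i _ => Real.sqrt_nonneg _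
      rw [← Real.sqrt_sq hnn']
      exact Real.sqrt_le_sqrt (h1.trans h2)
    rwa [Real.sqrt_mul (by positivity)] at h3
  -- tail bound
  have h4C : (0:ℝ) < 4 ^ m * C := by positivity
  have htail : ∑ i ∈ B, Real.sqrt (S i) ≤ X / 4 ^ m * s := by
    have h1 : ∀ i ∈ B, Real.sqrt (S i) ≤ n i / (4 ^ m * C) := by
      intro i hi
      obtain ⟨hik, hmi⟩ := hmemB i hi
      rw [le_div_iff₀ h4C]
      calc Real.sqrt (S i) * (4 ^ m * C) ≤ Real.sqrt (S i) * (4 ^ i * C) := by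
            apply mul_le_mul_of_nonneg_left _ (Real.sqrt_nonneg _)
            have : (4:ℝ) ^ m ≤ 4 ^ i := pow_le_pow_right₀ (by norm_num) hmi
            nlinarith
        _ = 4 ^ i * C * Real.sqrt (S i) := by ring
        _ ≤ n i := hgrowth i hik
    calc ∑ i ∈ B, Real.sqrt (S i) ≤ ∑ i ∈ B, n i / (4 ^ m * C) := Finset.sum_le_sum h1
      _ = (∑ i ∈ B, n i) / (4 ^ m * C) := by rw [Finset.sum_div]
      _ ≤ T / (4 ^ m * C) := by
          gcongr
          exact le_trans (Finset.sum_le_sum_of_subset_of_nonneg (Finset.filter_subset _ _)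
              fun i hi _ => hnn i (Nat.lt_succ_iff.mp (mem_range.mp hi))) hbudget
      _ = X / 4 ^ m * s := by rw [hT]; field_simp
  calc ∑ i ∈ range (k + 1), Real.sqrt (S i) = _ + _ := hsplit
    _ ≤ Real.sqrt m * s + X / 4 ^ m * s := add_le_add hhead htail
    _ = (Real.sqrt m + X / 4 ^ m) * s := by ring

private lemma log4_eq : Real.log 4 = 2 * Real.log 2 := by
  rw [show (4:ℝ) = 2 ^ 2 by norm_num, Real.log_pow]
  push_cast; ring

private lemma aux0 {X : ℝ} (hX1 : 1 ≤ X) (h14 : X ≤ 1.4) :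
    X ≤ Real.sqrt (Real.logb 4 X) + 1 := by
  have hX0 : (0:ℝ) < X := by linarith
  have hlog : 1 - X⁻¹ ≤ Real.log X := Real.one_sub_inv_le_log_of_pos hX0
  have hinv : X * X⁻¹ = 1 := mul_inv_cancel₀ (ne_of_gt hX0)
  have hL2 : Real.log 2 < 0.6931471808 := Real.log_two_lt_d9
  have hL2' : (0.6931471803:ℝ) < Real.log 2 := Real.log_two_gt_d9
  have hkey : (X - 1) ^ 2 ≤ Real.logb 4 X := by
    rw [Real.logb, log4_eq, le_div_iff₀ (by positivity)]
    nlinarith [mul_nonneg (sub_nonneg.2 hX1) (sub_nonneg.2 h14),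
      sq_nonneg (X - 1), mul_nonneg (mul_nonneg (sub_nonneg.2 hX1) (sub_nonneg.2 h14)) hX0.le]
  have := Real.sqrt_le_sqrt hkey
  rw [Real.sqrt_sq (by linarith)] at this
  linarith

private lemma aux1 {X : ℝ} (h14 : 1.4 ≤ X) (h4 : X ≤ 4) :
    X / 4 ≤ Real.sqrt (Real.logb 4 X) := by
  have hX0 : (0:ℝ) < X := by linarith
  have hL2 : Real.log 2 < 0.6931471808 := Real.log_two_lt_d9
  have hL2' : (0.6931471803:ℝ) < Real.log 2 := Real.log_two_gt_d9
  have hkey : (X / 4) ^ 2 ≤ Real.logb 4 X := by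
    rw [Real.logb, log4_eq, le_div_iff₀ (by positivity)]
    rcases le_total X 2 with h2 | h2
    · -- 1.4 ≤ X ≤ 2 : log X ≥ log 2 + 1 - 2/X
      have hhalf : (0:ℝ) < X / 2 := by linarith
      have h := Real.one_sub_inv_le_log_of_pos hhalf
      rw [Real.log_div (ne_of_gt hX0) (by norm_num)] at h
      have hinv : (X / 2) * (X / 2)⁻¹ = 1 := mul_inv_cancel₀ (ne_of_gt hhalf)
      nlinarith [mul_nonneg (sub_nonneg.2 h14) (sub_nonneg.2 h2),
        mul_nonneg (mul_nonneg (sub_nonneg.2 h14) (sub_nonneg.2 h2)) hX0.le,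
        sq_nonneg (X - 2), sq_nonneg (X - 1.4)]
    · -- 2 ≤ X ≤ 4 : log X ≥ log 4 + 1 - 4/X
      have hq : (0:ℝ) < X / 4 := by linarith
      have h := Real.one_sub_inv_le_log_of_pos hq
      rw [Real.log_div (ne_of_gt hX0) (by norm_num), log4_eq] at h
      have hinv : (X / 4) * (X / 4)⁻¹ = 1 := mul_inv_cancel₀ (ne_of_gt hq)
      nlinarith [mul_nonneg (sub_nonneg.2 h2) (sub_nonneg.2 h4),
        mul_nonneg (mul_nonneg (sub_nonneg.2 h2) (sub_nonneg.2 h4)) hX0.le,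
        sq_nonneg (X - 4), sq_nonneg (X - 2)]
  have := Real.sqrt_le_sqrt hkey
  rwa [Real.sqrt_sq (by linarith)] at this

private lemma aux2 {X : ℝ} (h4 : 4 ≤ X) :
    Real.sqrt (⌈Real.logb 4 X⌉₊ : ℝ) + X / 4 ^ ⌈Real.logb 4 X⌉₊
      ≤ Real.sqrt (Real.logb 4 X) + 1 := by
  have hX0 : (0:ℝ) < X := by linarith
  set x := Real.logb 4 X with hx
  have hx1 : (1:ℝ) ≤ x := by
    have : Real.logb 4 4 ≤ Real.logb 4 X :=
      Real.logb_le_logb_of_le (by norm_num) (by norm_num) h4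
    simpa using this
  set m := ⌈x⌉₊ with hm
  have hmx : x ≤ (m : ℝ) := Nat.le_ceil x
  have hm1 : (m : ℝ) ≤ x + 1 := (Nat.ceil_lt_add_one (by linarith)).le
  set δ : ℝ := (m : ℝ) - x with hδ
  have hδ0 : 0 ≤ δ := by simp [hδ]; linarith
  have hδ1 : δ ≤ 1 := by simp [hδ]; linarith
  -- X / 4^m = exp(-δ log 4)
  have hX4 : X = (4:ℝ) ^ x := (Real.rpow_logb (by norm_num) (by norm_num) hX0).symm
  have hpow : ((4:ℝ) ^ m : ℝ) = (4:ℝ) ^ ((m:ℕ) : ℝ) := (Real.rpow_natCast 4 m).symm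
  have hdiv : X / 4 ^ m = Real.exp (-δ * Real.log 4) := by
    rw [hX4, hpow, ← Real.rpow_sub (by norm_num), Real.rpow_def_of_pos (by norm_num)]
    congr 1
    simp [hδ]; ring
  -- convexity bound
  have hexp : Real.exp (-δ * Real.log 4) ≤ 1 - 3 * δ / 4 := by
    have hc := convexOn_exp.2 (Set.mem_univ (0:ℝ)) (Set.mem_univ (-Real.log 4))
      (by linarith : (0:ℝ) ≤ 1 - δ) hδ0 (by ring)
    simp only [smul_eq_mul, mul_zero, zero_add, Real.exp_zero, mul_one] at hc
    rw [Real.exp_neg, Real.exp_log (by norm_num : (0:ℝ) < 4)] at hc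
    calc Real.exp (-δ * Real.log 4) = Real.exp (δ * -Real.log 4) := by ring_nf
      _ ≤ 1 - δ + δ * (4:ℝ)⁻¹ := hc
      _ = 1 - 3 * δ / 4 := by ring
  have hsqx : 1 ≤ Real.sqrt x := by
    have := Real.sqrt_le_sqrt hx1
    simpa using this
  have hsqm : Real.sqrt (m : ℝ) ≤ Real.sqrt x + δ / 2 := by
    have h1 : (m : ℝ) ≤ (Real.sqrt x + δ / 2) ^ 2 := by
      have hsq : Real.sqrt x ^ 2 = x := Real.sq_sqrt (by linarith)
      nlinarith
    have := Real.sqrt_le_sqrt h1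
    rwa [Real.sqrt_sq (by positivity)] at this
  have : X / 4 ^ m ≤ 1 - δ / 2 := hdiv.le.trans (hexp.trans (by linarith))
  linarith

theorem stmt_18 (k : ℕ) (n S : ℕ → ℝ) (T C : ℝ) (hC : 0 < C)
    (hnn : ∀ i ≤ k, 0 ≤ n i) (hSnn : ∀ i ≤ k, 0 ≤ S i)
    (hbudget : ∑ i ∈ range (k + 1), n i ≤ T)
    (hgrowth : ∀ i ≤ k, (4 : ℝ) ^ i * C * Real.sqrt (S i) ≤ n i)
    (hSpos : 0 < ∑ i ∈ range (k + 1), S i)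
    (X : ℝ) (hX : X = T / (C * Real.sqrt (∑ i ∈ range (k + 1), S i)))
    (hX1 : 1 ≤ X) :
    ∑ i ∈ range (k + 1), Real.sqrt (S i) ≤
      (Real.sqrt (Real.logb 4 X) + 1) * Real.sqrt (∑ i ∈ range (k + 1), S i) := by
  have hs : 0 < Real.sqrt (∑ i ∈ range (k + 1), S i) := Real.sqrt_pos.2 hSpos
  have hT : T = X * (C * Real.sqrt (∑ i ∈ range (k + 1), S i)) := by
    rw [hX]; field_simp
  have main : ∀ m : ℕ, Real.sqrt (m : ℝ) + X / 4 ^ m ≤ Real.sqrt (Real.logb 4 X) + 1 →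
      ∑ i ∈ range (k + 1), Real.sqrt (S i) ≤
        (Real.sqrt (Real.logb 4 X) + 1) * Real.sqrt (∑ i ∈ range (k + 1), S i) := by
    intro m hcoef
    exact (split_bound k m n S T C X hC hnn hSnn hbudget hgrowth hT).trans
      (mul_le_mul_of_nonneg_right hcoef hs.le)
  rcases le_total X 1.4 with h14 | h14
  · refine main 0 ?_
    simpa using aux0 hX1 h14
  rcases le_total X 4 with h4 | h4
  · refine main 1 ?_
    have := aux1 h14 h4
    simp only [Nat.cast_one, Real.sqrt_one, pow_one]
    linarith
  · exact main _ (aux2 h4)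
end

section
/- Let $x_1, \dots, x_k \in \mathbb{R}^d$ with $\|x_i\|_2 \le L$ for all $i$, let $\lambda > 0$, and define $V_t = \lambda I + \sum_{i=1}^t x_i x_i^\top$. Then $\sum_{t=1}^k \min\{1, \|x_t\|_{V_{t-1}^{-1}}^2\} \le 2 \ln \frac{\det(V_k)}{\det(\lambda I)} \le 2d \ln\left(\frac{d\lambda + kL^2}{d\lambda}\right)$, where $\|x\|_{A}^2 = x^\top A x$. -/
/-!
Adding the rank-one term `x xᵀ` to a positive definite `V` multiplies its determinant by
`1 + ‖x‖²_{V⁻¹}` (matrix determinant lemma), so `log (det V_k / det V_0)` telescopes into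
`∑ log (1 + ‖x_t‖²_{V_{t-1}⁻¹})`, and `min 1 u ≤ 2 log (1 + u)` termwise. For the second
inequality, AM-GM on the eigenvalues bounds `det V_k` by `(tr V_k / d) ^ d`, and
`tr V_k ≤ d λ + k L²`.
-/

open Matrix Finset

namespace Real

theorem min_one_le_two_mul_log_one_add {u : ℝ} (hu : 0 ≤ u) : min 1 u ≤ 2 * log (1 + u) := by
  have hpos : 0 < 1 + u := by linarith
  have hlog : u / (1 + u) ≤ log (1 + u) := by
    have := one_sub_inv_le_log_of_pos hpos
    rwa [← one_div, one_sub_div hpos.ne', add_sub_cancel_left] at this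
  have hmin : min 1 u ≤ 2 * (u / (1 + u)) := by
    rw [mul_div_assoc', le_div_iff₀ hpos]
    rcases le_total u 1 with h | h
    · rw [min_eq_right h]; nlinarith
    · rw [min_eq_left h]; linarith
  linarith

theorem prod_le_sum_div_card_pow {ι : Type*} (s : Finset ι) {z : ι → ℝ}
    (hz : ∀ i ∈ s, 0 ≤ z i) : ∏ i ∈ s, z i ≤ ((∑ i ∈ s, z i) / #s) ^ #s := by
  rcases s.eq_empty_or_nonempty with rfl | hs
  · simp
  have hcard : (0 : ℝ) < #s := by exact_mod_cast hs.card_pos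
  have amgm := geom_mean_le_arith_mean s (fun _ ↦ 1) z (fun _ _ ↦ zero_le_one)
    (by simpa using hcard) hz
  simp only [rpow_one, one_mul, sum_const, nsmul_eq_mul, mul_one] at amgm
  calc ∏ i ∈ s, z i = ((∏ i ∈ s, z i) ^ ((#s : ℝ)⁻¹)) ^ #s :=
        (rpow_inv_natCast_pow (prod_nonneg hz) hs.card_pos.ne').symm
    _ ≤ ((∑ i ∈ s, z i) / #s) ^ #s := by gcongr; exact rpow_nonneg (prod_nonneg hz) _

end Real

namespace Matrix

variable {n : Type*} [Fintype n] [DecidableEq n]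

theorem det_add_vecMulVec {R : Type*} [CommRing R] {A : Matrix n n R} (hA : IsUnit A.det)
    (u v : n → R) : (A + vecMulVec u v).det = A.det * (1 + v ⬝ᵥ (A⁻¹ *ᵥ u)) := by
  rw [vecMulVec_eq Unit, det_add_replicateCol_mul_replicateRow hA]
  congr 1
  rw [det_unique, add_apply, one_apply_eq, ← replicateRow_vecMul,
    replicateRow_mul_replicateCol_apply, ← dotProduct_mulVec]

theorem PosSemidef.det_le_trace_div_card_pow {A : Matrix n n ℝ} (hA : A.PosSemidef) :
    A.det ≤ (A.trace / Fintype.card n) ^ Fintype.card n := by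
  rw [hA.isHermitian.det_eq_prod_eigenvalues, hA.isHermitian.trace_eq_sum_eigenvalues]
  simpa using Real.prod_le_sum_div_card_pow univ fun i _ ↦ hA.eigenvalues_nonneg i

end Matrix

section EllipticalPotential

variable {n : Type*}

def regularizedGram (A : Matrix n n ℝ) (x : ℕ → n → ℝ) (t : ℕ) : Matrix n n ℝ :=
  A + ∑ i ∈ Icc 1 t, vecMulVec (x i) (x i)

variable {A : Matrix n n ℝ} {x : ℕ → n → ℝ}

@[simp]
theorem regularizedGram_zero : regularizedGram A x 0 = A := by
  simp [regularizedGram]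

theorem regularizedGram_succ (t : ℕ) :
    regularizedGram A x (t + 1) = regularizedGram A x t + vecMulVec (x (t + 1)) (x (t + 1)) := by
  rw [regularizedGram, regularizedGram, sum_Icc_succ_top (by omega), add_assoc]

variable [Fintype n]

theorem trace_regularizedGram_le {L : ℝ} {k : ℕ} (hx : ∀ i ∈ Icc 1 k, x i ⬝ᵥ x i ≤ L ^ 2) :
    (regularizedGram A x k).trace ≤ A.trace + k * L ^ 2 := by
  rw [regularizedGram, trace_add, trace_sum]
  gcongr
  calc ∑ i ∈ Icc 1 k, (vecMulVec (x i) (x i)).trace ≤ ∑ i ∈ Icc 1 k, L ^ 2 := by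
        simpa only [trace_vecMulVec] using sum_le_sum hx
    _ = k * L ^ 2 := by simp

theorem Matrix.PosDef.regularizedGram (hA : A.PosDef) (t : ℕ) :
    (regularizedGram A x t).PosDef :=
  hA.add_posSemidef <| posSemidef_sum _ fun i _ ↦ by
    simpa using posSemidef_vecMulVec_self_star (x i)

variable [DecidableEq n]

theorem det_regularizedGram (hA : A.PosDef) (k : ℕ) :
    (regularizedGram A x k).det =
      A.det * ∏ t ∈ Icc 1 k, (1 + x t ⬝ᵥ ((regularizedGram A x (t - 1))⁻¹ *ᵥ x t)) := by
  induction k with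
  | zero => simp
  | succ k ih =>
    rw [regularizedGram_succ, det_add_vecMulVec (hA.regularizedGram k).det_pos.ne'.isUnit, ih,
      prod_Icc_succ_top (by omega), Nat.add_sub_cancel, mul_assoc]

theorem sum_min_one_le_two_mul_log_det_regularizedGram_div (hA : A.PosDef) (k : ℕ) :
    ∑ t ∈ Icc 1 k, min 1 (x t ⬝ᵥ ((regularizedGram A x (t - 1))⁻¹ *ᵥ x t)) ≤
      2 * Real.log ((regularizedGram A x k).det / A.det) := by
  set u : ℕ → ℝ := fun t ↦ x t ⬝ᵥ ((regularizedGram A x (t - 1))⁻¹ *ᵥ x t)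
  have hu : ∀ t, 0 ≤ u t := fun t ↦ by
    simpa using (hA.regularizedGram (t - 1)).inv.posSemidef.dotProduct_mulVec_nonneg (x t)
  have hratio : (regularizedGram A x k).det / A.det = ∏ t ∈ Icc 1 k, (1 + u t) := by
    rw [det_regularizedGram hA, mul_div_cancel_left₀ _ hA.det_pos.ne']
  calc ∑ t ∈ Icc 1 k, min 1 (u t) ≤ ∑ t ∈ Icc 1 k, 2 * Real.log (1 + u t) :=
        sum_le_sum fun t _ ↦ Real.min_one_le_two_mul_log_one_add (hu t)
    _ = 2 * Real.log ((regularizedGram A x k).det / A.det) := by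
        rw [← mul_sum, hratio, Real.log_prod fun t _ ↦ by linarith [hu t]]

theorem det_regularizedGram_smul_one_div_le {lam L : ℝ} (hlam : 0 < lam) {k : ℕ}
    (hx : ∀ i ∈ Icc 1 k, x i ⬝ᵥ x i ≤ L ^ 2) :
    (regularizedGram (lam • 1) x k).det / (lam • (1 : Matrix n n ℝ)).det ≤
      ((Fintype.card n * lam + k * L ^ 2) / (Fintype.card n * lam)) ^ Fintype.card n := by
  set d := Fintype.card n
  have hV := (PosDef.one.smul hlam).regularizedGram (x := x) k
  have htrace : (regularizedGram (lam • 1) x k).trace ≤ d * lam + k * L ^ 2 := by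
    simpa [mul_comm lam] using trace_regularizedGram_le (A := lam • 1) hx
  calc (regularizedGram (lam • 1) x k).det / (lam • (1 : Matrix n n ℝ)).det
      ≤ ((d * lam + k * L ^ 2) / d) ^ d / lam ^ d := by
        rw [det_smul, det_one, mul_one]
        gcongr
        refine hV.posSemidef.det_le_trace_div_card_pow.trans ?_
        have := hV.posSemidef.trace_nonneg
        gcongr
    _ = ((d * lam + k * L ^ 2) / (d * lam)) ^ d := by rw [← div_pow, div_div]

end EllipticalPotential

theorem stmt_19_general (d k : ℕ) (x : ℕ → Fin d → ℝ) (L : ℝ)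
    (hx : ∀ i ∈ Icc 1 k, x i ⬝ᵥ x i ≤ L ^ 2)
    (lam : ℝ) (hlam : 0 < lam)
    (V : ℕ → Matrix (Fin d) (Fin d) ℝ)
    (hV : ∀ t, V t = lam • (1 : Matrix (Fin d) (Fin d) ℝ) +
      ∑ i ∈ Icc 1 t, vecMulVec (x i) (x i)) :
    (∑ t ∈ Icc 1 k, min 1 (x t ⬝ᵥ ((V (t - 1))⁻¹ *ᵥ x t)) ≤
        2 * Real.log ((V k).det / (lam • (1 : Matrix (Fin d) (Fin d) ℝ)).det)) ∧
    2 * Real.log ((V k).det / (lam • (1 : Matrix (Fin d) (Fin d) ℝ)).det) ≤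
      2 * d * Real.log ((d * lam + k * L ^ 2) / (d * lam)) := by
  obtain rfl : V = regularizedGram (lam • 1) x := funext hV
  have hA : (lam • (1 : Matrix (Fin d) (Fin d) ℝ)).PosDef := PosDef.one.smul hlam
  refine ⟨sum_min_one_le_two_mul_log_det_regularizedGram_div hA k, ?_⟩
  have hratio := det_regularizedGram_smul_one_div_le hlam hx
  rw [Fintype.card_fin] at hratio
  rw [mul_assoc, ← Real.log_pow]
  gcongr
  exact div_pos (hA.regularizedGram k).det_pos hA.det_pos

theorem stmt_19 (d k : ℕ) (hd : 0 < d) (x : ℕ → Fin d → ℝ) (L : ℝ) (hL : 0 < L)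
    (hx : ∀ i ∈ Icc 1 k, x i ⬝ᵥ x i ≤ L ^ 2)
    (lam : ℝ) (hlam : 0 < lam)
    (V : ℕ → Matrix (Fin d) (Fin d) ℝ)
    (hV : ∀ t, V t = lam • (1 : Matrix (Fin d) (Fin d) ℝ) +
      ∑ i ∈ Icc 1 t, vecMulVec (x i) (x i)) :
    (∑ t ∈ Icc 1 k, min 1 (x t ⬝ᵥ ((V (t - 1))⁻¹ *ᵥ x t)) ≤
        2 * Real.log ((V k).det / (lam • (1 : Matrix (Fin d) (Fin d) ℝ)).det)) ∧
    2 * Real.log ((V k).det / (lam • (1 : Matrix (Fin d) (Fin d) ℝ)).det) ≤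
      2 * d * Real.log ((d * lam + k * L ^ 2) / (d * lam)) :=
  stmt_19_general d k x L hx lam hlam V hV
end
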